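/- For all natural numbers a, b, c, m, p, we have ∑_{k=0}^{a} C(a,k)·C(b,m+k)·C(k,c)·C(p+k, a+b−c) = C(p−m, b−c−m)·C(p+c, m+a)·C(a,c). -/

import Mathlib

/-!
Since `C x y` vanishes outside `0 ≤ y ≤ x`, the trinomial revision
`C(x,y) C(y,z) = C(x,z) C(x-z,y-z)` and the symmetry `C(x,y) = C(x,x-y)` hold for all integers,
and Vandermonde's convolution holds for sums over any range covering the support.

Factoring `C(a,k) C(k,c) = C(a,c) C(a-c,k-c)` and putting `k = c + j`, `A = a - c`, `M = m + c`,
`P = p + c` reduces the claim to `∑_j C(A,j) C(b,M+j) C(P+j,A+b) = C(P-M,b-M) C(P,M+A)`.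
For `P = M + q`, expand `C(P+j,A+b) = ∑_i C(q,i) C(M+j,A+b-i)` and revise
`C(b,M+j) C(M+j,A+b-i) = C(b,A+b-i) C(i-A,b-M-j)`; the sum over `j` is then `C(i,b-M)` by
Vandermonde, and `C(q,i) C(i,b-M) = C(q,b-M) C(q-b+M,i-b+M)` leaves a last Vandermonde sum over `i`
equal to `C(M+q,M+A)`.
-/

/-- Binomial coefficient for integers: `C x y` is the usual binomial coefficient
when `0 ≤ y ≤ x`, and `0` otherwise. -/
def C (x y : ℤ) : ℤ := if 0 ≤ y ∧ y ≤ x then (x.toNat.choose y.toNat : ℤ) else 0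

open Finset

lemma C_eq_zero {x y : ℤ} (h : y < 0 ∨ x < y) : C x y = 0 :=
  if_neg (by omega)

lemma C_natCast (n k : ℕ) : C n k = n.choose k := by
  unfold C
  split_ifs with h
  · simp
  · rw [Nat.choose_eq_zero_of_lt (by omega), Nat.cast_zero]

lemma C_symm (x y : ℤ) : C x y = C x (x - y) := by
  unfold C
  split_ifs with h₁ h₂ h₂
  · rw [show (x - y).toNat = x.toNat - y.toNat by omega, Nat.choose_symm (by omega)]
  all_goals first | rfl | omega

lemma C_mul_C (x y z : ℤ) : C x y * C y z = C x z * C (x - z) (y - z) := by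
  unfold C
  split_ifs <;> try first | omega | simp
  rw [show (x - z).toNat = x.toNat - z.toNat by omega, show (y - z).toNat = y.toNat - z.toNat by omega,
    ← Nat.cast_mul, ← Nat.cast_mul, Nat.choose_mul (by omega)]

lemma sum_range_add_sub {R : Type*} [AddCommMonoid R] (f : ℤ → R) (hf : ∀ i < 0, f i = 0)
    (t n : ℕ) : ∑ i ∈ range (t + n), f (i - t) = ∑ i ∈ range n, f i := by
  rw [sum_range_add, sum_eq_zero fun i hi => hf _ (by simp at hi; omega), zero_add]
  simp

lemma sum_range_C_mul_C (u v n : ℕ) (s : ℤ) (hn : u < n) :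
    ∑ i ∈ range n, C u i * C v (s - i) = C (u + v) s := by
  rcases lt_or_ge s 0 with hs | hs
  · rw [C_eq_zero (Or.inl hs), sum_eq_zero fun i _ => by rw [C_eq_zero (x := v) (by omega), mul_zero]]
  lift s to ℕ using hs with k
  have hsub : range n ⊆ range (n + k + 1) := range_subset_range.2 (by omega)
  have hsub' : range (k + 1) ⊆ range (n + k + 1) := range_subset_range.2 (by omega)
  rw [sum_subset hsub fun i hi hi' => by
      rw [C_eq_zero (x := u) (by simp at hi hi'; omega), zero_mul],
    ← sum_subset hsub' fun i hi hi' => by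
      rw [C_eq_zero (x := v) (by simp at hi hi'; omega), mul_zero],
    ← Nat.cast_add, C_natCast, Nat.add_choose_eq, Nat.sum_antidiagonal_eq_sum_range_succ_mk]
  push_cast
  refine sum_congr rfl fun i hi => ?_
  rw [mem_range] at hi
  rw [← C_natCast, ← C_natCast, Nat.cast_sub (by omega)]

lemma sum_range_C_sub_mul_C (u v t n : ℕ) (s : ℤ) (hn : t + u < n) :
    ∑ i ∈ range n, C u (i - t) * C v (s - i) = C (u + v) (s - t) := by
  obtain ⟨n, rfl⟩ : ∃ n', n = t + n' := ⟨n - t, by omega⟩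
  have shift := sum_range_add_sub (fun i => C u i * C v (s - t - i)) (fun i hi => by
    rw [C_eq_zero (Or.inl hi), zero_mul]) t n
  rw [sum_range_C_mul_C u v n _ (by omega)] at shift
  rw [← shift]
  refine sum_congr rfl fun i _ => ?_
  ring_nf

lemma sum_C_mul_C_mul_C_of_le (A b M q : ℕ) :
    ∑ j ∈ range (A + 1), C A j * C b (M + j) * C (M + q + j) (A + b) =
      C q (b - M) * C (M + q) (M + A) := by
  have vandermonde_top (j : ℕ) : C (M + q + j) (A + b) =
      ∑ i ∈ range (q + 1), C q i * C (M + j) (A + b - i) := by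
    have h := sum_range_C_mul_C q (M + j) (q + 1) (A + b) (by omega)
    push_cast at h
    rw [h]; ring_nf
  have trinomial (i j : ℕ) : C b (M + j) * C (M + j) (A + b - i) =
      C b (A + b - i) * C (i - A) (b - M - j) := by
    rw [C_mul_C, C_symm (b - _)]; ring_nf
  have vandermonde_inner (i : ℕ) : C b (A + b - i) *
      ∑ j ∈ range (A + 1), C A j * C (i - A) (b - M - j) = C b (A + b - i) * C i (b - M) := by
    rcases lt_or_ge i A with hi | hi
    · rw [C_eq_zero (Or.inr (by omega)), zero_mul, zero_mul]
    · have h := sum_range_C_mul_C A (i - A) (A + 1) (b - M) (by omega)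
      push_cast [hi] at h
      rw [h, add_sub_cancel]
  have vandermonde_shift (h : 0 ≤ (b : ℤ) - M ∧ (b : ℤ) - M ≤ q) :
      ∑ i ∈ range (q + 1), C (q - (b - M)) (i - (b - M)) * C b (A + b - i) = C (M + q) (M + A) := by
    have h := sum_range_C_sub_mul_C (q + M - b) b (b - M) (q + 1) (A + b) (by omega)
    push_cast [show b ≤ q + M by omega, show M ≤ b by omega] at h
    rw [show (q : ℤ) - (b - M) = q + M - b by ring, h]
    ring_nf
  calc ∑ j ∈ range (A + 1), C A j * C b (M + j) * C (M + q + j) (A + b)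
      = ∑ i ∈ range (q + 1), C q i * (C b (A + b - i) *
          ∑ j ∈ range (A + 1), C A j * C (i - A) (b - M - j)) := by
        simp_rw [vandermonde_top, mul_sum]
        rw [sum_comm]
        refine sum_congr rfl fun i _ => sum_congr rfl fun j _ => ?_
        linear_combination C A j * C q i * trinomial i j
    _ = ∑ i ∈ range (q + 1), C q i * C i (b - M) * C b (A + b - i) := by
        refine sum_congr rfl fun i _ => ?_
        rw [vandermonde_inner]; ring
    _ = C q (b - M) * ∑ i ∈ range (q + 1), C (q - (b - M)) (i - (b - M)) * C b (A + b - i) := by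
        rw [mul_sum]
        refine sum_congr rfl fun i _ => ?_
        rw [C_mul_C]; ring
    _ = C q (b - M) * C (M + q) (M + A) := by
        by_cases h : 0 ≤ (b : ℤ) - M ∧ (b : ℤ) - M ≤ q
        · rw [vandermonde_shift h]
        · rw [C_eq_zero (by omega), zero_mul, zero_mul]

lemma sum_C_mul_C_mul_C (A b M P : ℕ) :
    ∑ j ∈ range (A + 1), C A j * C b (M + j) * C (P + j) (A + b) =
      C (P - M) (b - M) * C P (M + A) := by
  rcases le_or_gt M P with hMP | hPM
  · obtain ⟨q, rfl⟩ := Nat.exists_eq_add_of_le hMP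
    push_cast
    rw [sum_C_mul_C_mul_C_of_le, add_sub_cancel_left]
  · rw [C_eq_zero (by omega), zero_mul]
    refine sum_eq_zero fun j _ => ?_
    rcases le_or_gt (M + j) b with h | h
    · rw [C_eq_zero (x := P + j) (by omega), mul_zero]
    · rw [C_eq_zero (x := b) (by omega), mul_zero, zero_mul]

theorem stmt_14 (a b c m p : ℕ) :
    ∑ k ∈ Finset.range (a + 1), C a k * C b ((m : ℤ) + k) * C k c * C ((p : ℤ) + k) ((a : ℤ) + b - c) = C ((p : ℤ) - m) ((b : ℤ) - c - m) * C ((p : ℤ) + c) ((m : ℤ) + a) * C a c := by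
  have factor (k : ℕ) : C a k * C b (m + k) * C k c * C (p + k) (a + b - c) =
      (C (a - c) (k - c) * C b (m + k) * C (p + k) (a + b - c)) * C a c := by
    linear_combination C b (m + k) * C (p + k) (a + b - c) * C_mul_C a k c
  rw [sum_congr rfl fun k _ => factor k, ← sum_mul]
  rcases lt_or_ge a c with hac | hca
  · rw [C_eq_zero (Or.inr (by omega)), mul_zero, mul_zero]
  obtain ⟨A, rfl⟩ := Nat.exists_eq_add_of_le hca
  congr 1
  have shift := sum_range_add_sub (fun j => C A j * C b (m + c + j) * C (p + c + j) (A + b))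
    (fun j hj => by rw [C_eq_zero (Or.inl hj), zero_mul, zero_mul]) c (A + 1)
  have core := sum_C_mul_C_mul_C A b (m + c) (p + c)
  push_cast at core ⊢
  convert shift.trans core using 1
  · rw [add_assoc]
    refine sum_congr rfl fun k _ => ?_
    ring_nf
  · ring_nf
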